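/- arXiv:1906.05450 — 6 statements merged into one kernel-verified Lean document; each statement's English description precedes it below -/
import Mathlib

section
/- Let n ≥ 1, p ≥ 2, let C ∈ ℝ^{n×n} be symmetric, and let ε ≥ 0. If V ∈ Ob(p,n) is an ε-approximate concave point of the problem max_{V ∈ Ob(p,n)} tr(C VᵀV), then tr(C VᵀV) ≥ SDP(C) − (1/(p−1))·(SDP(C) + SDP(−C)) − (n/2)·ε. -/
open Matrix

/-- `SDP C` is the supremum of `tr(C X)` over all symmetric positive semidefinite
matrices `X` with unit diagonal. -/
noncomputable def SDP {n : ℕ} (C : Matrix (Fin n) (Fin n) ℝ) : ℝ :=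
  sSup {t : ℝ | ∃ X : Matrix (Fin n) (Fin n) ℝ,
    X.PosSemidef ∧ (∀ i, X i i = 1) ∧ t = (C * X).trace}

/-!
For a feasible `X = BᵀB`, test the concavity inequality on the directions `e_k bₗᵀ` projected
onto the tangent space at `V`, for all `k ≤ p` and all rows `bₗ` of `B`. Summed over these
directions, `UᵀU` becomes `(p - 2) X + X ⊙ G ⊙ G` with `G = VᵀV`, whose diagonal is `p - 1`.
By the Schur product theorem `X ⊙ G ⊙ G` is again feasible, so its contribution is at least
`-SDP (-C)`. This gives `(p - 2) tr (C X) - SDP (-C) ≤ (p - 1) (tr (C G) + n ε / 2)`, and taking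
the supremum over `X` yields the bound.
-/

theorem Matrix.PosSemidef.sq_apply_le_mul_apply {ι : Type*} [Fintype ι]
    {X : Matrix ι ι ℝ} (hX : X.PosSemidef) (i j : ι) : X i j ^ 2 ≤ X i i * X j j := by
  have hdet := (hX.submatrix ![i, j]).det_nonneg
  have hsymm : X j i = X i j := by simpa using hX.isHermitian.apply i j
  simp only [det_fin_two, submatrix_apply, cons_val_zero, cons_val_one, hsymm] at hdet
  linarith

theorem bddAbove_SDP_set {n : ℕ} (C : Matrix (Fin n) (Fin n) ℝ) :
    BddAbove {t : ℝ | ∃ X : Matrix (Fin n) (Fin n) ℝ,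
      X.PosSemidef ∧ (∀ i, X i i = 1) ∧ t = (C * X).trace} := by
  refine ⟨∑ i, ∑ j, |C i j|, ?_⟩
  rintro _ ⟨X, hX, hd, rfl⟩
  simp only [trace, diag, mul_apply]
  gcongr with i _ j _
  have hXji : |X j i| ≤ 1 := by
    rw [← sq_le_one_iff_abs_le_one]
    simpa [hd] using hX.sq_apply_le_mul_apply j i
  calc C i j * X j i ≤ |C i j| * |X j i| := (le_abs_self _).trans (abs_mul _ _).le
    _ ≤ |C i j| := mul_le_of_le_one_right (abs_nonneg _) hXji

theorem trace_mul_le_SDP {n : ℕ} (C X : Matrix (Fin n) (Fin n) ℝ) (hX : X.PosSemidef)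
    (hd : ∀ i, X i i = 1) : (C * X).trace ≤ SDP C :=
  le_csSup (bddAbove_SDP_set C) ⟨X, hX, hd, rfl⟩

theorem neg_SDP_neg_le_trace_mul {n : ℕ} (C X : Matrix (Fin n) (Fin n) ℝ) (hX : X.PosSemidef)
    (hd : ∀ i, X i i = 1) : -SDP (-C) ≤ (C * X).trace := by
  simpa [neg_le] using trace_mul_le_SDP (-C) X hX hd

theorem mul_SDP_le {n : ℕ} (C : Matrix (Fin n) (Fin n) ℝ) {c b : ℝ} (hc : 0 ≤ c)
    (h : ∀ X : Matrix (Fin n) (Fin n) ℝ, X.PosSemidef → (∀ i, X i i = 1) →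
      c * (C * X).trace ≤ b) :
    c * SDP C ≤ b := by
  rw [SDP, ← smul_eq_mul, ← Real.sSup_smul_of_nonneg hc]
  refine csSup_le (Set.Nonempty.smul_set ⟨_, 1, PosSemidef.one, fun i => one_apply_eq i, rfl⟩) ?_
  rintro _ ⟨_, ⟨X, hX, hd, rfl⟩, rfl⟩
  exact h X hX hd

section Oblique

variable {ι κ m : Type*}

theorem sum_sum_projector_mul_projector [Fintype κ] [DecidableEq κ] (a b : κ → ℝ)
    (ha : ∑ j, a j ^ 2 = 1) (hb : ∑ j, b j ^ 2 = 1) :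
    ∑ k, ∑ j, ((1 : Matrix κ κ ℝ) j k - a j * a k) * ((1 : Matrix κ κ ℝ) j k - b j * b k)
      = Fintype.card κ - 2 + (∑ j, a j * b j) ^ 2 := by
  simp only [sub_mul, mul_sub, Finset.sum_sub_distrib, one_apply, ite_mul, mul_ite, one_mul,
    zero_mul, mul_one, mul_zero, Finset.sum_ite_eq', Finset.mem_univ, if_true]
  have hcross : ∑ x, ∑ y, a y * a x * (b y * b x) = (∑ j, a j * b j) ^ 2 := by
    rw [sq, Finset.sum_mul_sum]
    exact Finset.sum_congr rfl fun _ _ => Finset.sum_congr rfl fun _ _ => by ring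
  simp only [← sq, ha, hb, hcross, Finset.sum_const, Finset.card_univ, nsmul_eq_mul, mul_one]
  ring

/-- Column `i` is `B l i • (1 - vᵢ vᵢᵀ) e_k`: the direction `e_k bₗᵀ` projected onto the tangent
space at `V`. -/
def projectedDirection [DecidableEq κ] (V : Matrix κ ι ℝ) (B : Matrix m ι ℝ) (k : κ) (l : m) :
    Matrix κ ι ℝ :=
  of fun j i => B l i * ((1 : Matrix κ κ ℝ) j k - V j i * V k i)

theorem projectedDirection_tangent [Fintype κ] [DecidableEq κ] {V : Matrix κ ι ℝ}
    (hV : ∀ i, ∑ j, V j i ^ 2 = 1) (B : Matrix m ι ℝ) (k : κ) (l : m) (i : ι) :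
    ∑ j, V j i * projectedDirection V B k l j i = 0 := by
  simp only [projectedDirection, of_apply, mul_sub, one_apply, mul_ite, mul_one, mul_zero,
    Finset.sum_sub_distrib, Finset.sum_ite_eq', Finset.mem_univ, if_true]
  have : ∑ j, V j i * (B l i * (V j i * V k i)) = B l i * V k i * ∑ j, V j i ^ 2 := by
    rw [Finset.mul_sum]
    exact Finset.sum_congr rfl fun _ _ => by ring
  rw [this, hV]
  ring

theorem sum_gram_projectedDirection [Fintype ι] [Fintype κ] [DecidableEq κ] [Fintype m]
    {V : Matrix κ ι ℝ} (hV : ∀ i, ∑ j, V j i ^ 2 = 1) (B : Matrix m ι ℝ) :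
    ∑ q : κ × m, (projectedDirection V B q.1 q.2)ᵀ * projectedDirection V B q.1 q.2
      = ((Fintype.card κ : ℝ) - 2) • (Bᵀ * B) + (Bᵀ * B) ⊙ ((Vᵀ * V) ⊙ (Vᵀ * V)) := by
  ext i i'
  have hproj := sum_sum_projector_mul_projector (fun j => V j i) (fun j => V j i') (hV i) (hV i')
  simp only [Matrix.sum_apply, mul_apply, transpose_apply, projectedDirection, of_apply,
    Matrix.add_apply, Matrix.smul_apply, hadamard_apply, smul_eq_mul, Fintype.sum_prod_type]
  rw [← sq, mul_comm ((Fintype.card κ : ℝ) - 2), ← mul_add, ← hproj, Finset.mul_sum]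
  refine Finset.sum_congr rfl fun k _ => ?_
  rw [Finset.sum_mul]
  refine Finset.sum_congr rfl fun l _ => ?_
  rw [Finset.mul_sum]
  exact Finset.sum_congr rfl fun j _ => by ring

/-- The left-hand side is `⟨U, Hess f(V)[U]⟩` for `f V = tr (C VᵀV)` on the product of the unit
spheres containing the columns of `V`. -/
def IsApproxConcavePoint [Fintype ι] [Fintype κ] (C : Matrix ι ι ℝ) (ε : ℝ) (V : Matrix κ ι ℝ) :
    Prop :=
  ∀ U : Matrix κ ι ℝ, (∀ i, ∑ j, V j i * U j i = 0) →
    2 * (C * (Uᵀ * U)).trace - 2 * ∑ i, (Vᵀ * V * C) i i * (∑ j, (U j i) ^ 2)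
      ≤ ε * ∑ j, ∑ i, (U j i) ^ 2

theorem IsApproxConcavePoint.sum_gram_le [Fintype ι] [Fintype κ] {C : Matrix ι ι ℝ} {ε : ℝ}
    {V : Matrix κ ι ℝ} (hconc : IsApproxConcavePoint C ε V) {α : Type*} [Fintype α]
    (U : α → Matrix κ ι ℝ) (hU : ∀ a i, ∑ j, V j i * U a j i = 0) :
    2 * (C * ∑ a, (U a)ᵀ * U a).trace - 2 * ∑ i, (Vᵀ * V * C) i i * (∑ a, (U a)ᵀ * U a) i i
      ≤ ε * (∑ a, (U a)ᵀ * U a).trace := by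
  have hdiag : ∀ (W : Matrix κ ι ℝ) i, ∑ j, W j i ^ 2 = (Wᵀ * W) i i := fun W i => by
    simp only [mul_apply, transpose_apply, sq]
  have htrace : ∀ W : Matrix κ ι ℝ, ∑ j, ∑ i, W j i ^ 2 = (Wᵀ * W).trace := fun W => by
    rw [Finset.sum_comm]
    exact Finset.sum_congr rfl fun i _ => hdiag W i
  have hgram := Finset.sum_le_sum fun a (_ : a ∈ Finset.univ) => hconc (U a) (hU a)
  simp only [hdiag, htrace] at hgram
  simp only [trace_sum, Matrix.sum_apply, Finset.mul_sum, Finset.sum_sub_distrib] at hgram ⊢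
  rwa [Finset.sum_comm (γ := ι)]

theorem posSemidef_transpose_mul_self [Fintype ι] [Fintype κ] (V : Matrix κ ι ℝ) :
    (Vᵀ * V).PosSemidef := by
  simpa using posSemidef_conjTranspose_mul_self V

theorem transpose_mul_self_apply_self_eq_one [Fintype κ] {V : Matrix κ ι ℝ}
    (hV : ∀ i, ∑ j, V j i ^ 2 = 1) (i : ι) : (Vᵀ * V) i i = 1 := by
  simpa only [mul_apply, transpose_apply, sq] using hV i

open scoped MatrixOrder in
theorem IsApproxConcavePoint.card_sub_two_mul_trace_le [Fintype ι] [Fintype κ]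
    {C : Matrix ι ι ℝ} {ε : ℝ} {V : Matrix κ ι ℝ} (hconc : IsApproxConcavePoint C ε V)
    (hV : ∀ i, ∑ j, V j i ^ 2 = 1) {X : Matrix ι ι ℝ} (hX : X.PosSemidef) (hXd : ∀ i, X i i = 1) :
    ((Fintype.card κ : ℝ) - 2) * (C * X).trace + (C * (X ⊙ ((Vᵀ * V) ⊙ (Vᵀ * V)))).trace
      ≤ ((Fintype.card κ : ℝ) - 1) * ((C * (Vᵀ * V)).trace + Fintype.card ι / 2 * ε) := by
  classical
  obtain ⟨B, hB⟩ := CStarAlgebra.nonneg_iff_eq_star_mul_self.mp hX.nonneg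
  rw [star_eq_conjTranspose, conjTranspose_eq_transpose_of_trivial] at hB
  have hsum := hconc.sum_gram_le (fun q : κ × ι => projectedDirection V B q.1 q.2)
    fun q => projectedDirection_tangent hV B q.1 q.2
  rw [sum_gram_projectedDirection hV, ← hB] at hsum
  set W := ((Fintype.card κ : ℝ) - 2) • X + X ⊙ ((Vᵀ * V) ⊙ (Vᵀ * V))
  have hWd : ∀ i, W i i = (Fintype.card κ : ℝ) - 1 := fun i => by
    simp only [W, Matrix.add_apply, Matrix.smul_apply, hadamard_apply, smul_eq_mul, hXd,
      transpose_mul_self_apply_self_eq_one hV]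
    ring
  have hCW : (C * W).trace
      = ((Fintype.card κ : ℝ) - 2) * (C * X).trace + (C * (X ⊙ ((Vᵀ * V) ⊙ (Vᵀ * V)))).trace := by
    rw [Matrix.mul_add, trace_add, Matrix.mul_smul, trace_smul, smul_eq_mul]
  have hDW : ∑ i, (Vᵀ * V * C) i i * W i i
      = ((Fintype.card κ : ℝ) - 1) * (C * (Vᵀ * V)).trace := by
    simp only [hWd, ← Finset.sum_mul, trace_mul_comm C]
    exact mul_comm _ _
  have hW : W.trace = Fintype.card ι * ((Fintype.card κ : ℝ) - 1) := by
    simp only [trace, diag, hWd, Finset.sum_const, Finset.card_univ, nsmul_eq_mul]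
  rw [hCW, hDW, hW] at hsum
  linarith

end Oblique

theorem approx_concave_point_bound_general {n p : ℕ} (hp : 2 ≤ p)
    (C : Matrix (Fin n) (Fin n) ℝ) (ε : ℝ)
    (V : Matrix (Fin p) (Fin n) ℝ)
    (hV : ∀ i, ∑ j, (V j i) ^ 2 = 1)
    (hconc : ∀ U : Matrix (Fin p) (Fin n) ℝ,
      (∀ i, ∑ j, V j i * U j i = 0) →
      2 * (C * (Uᵀ * U)).trace - 2 * ∑ i, (Vᵀ * V * C) i i * (∑ j, (U j i) ^ 2)
        ≤ ε * ∑ j, ∑ i, (U j i) ^ 2) :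
    (C * (Vᵀ * V)).trace
      ≥ SDP C - (1 / ((p : ℝ) - 1)) * (SDP C + SDP (-C)) - ((n : ℝ) / 2) * ε := by
  have hp2 : (2 : ℝ) ≤ p := by exact_mod_cast hp
  have hG := posSemidef_transpose_mul_self V
  have hSDP : ((p : ℝ) - 2) * SDP C
      ≤ ((p : ℝ) - 1) * ((C * (Vᵀ * V)).trace + n / 2 * ε) + SDP (-C) := by
    refine mul_SDP_le C (by linarith) fun X hX hXd => ?_
    have hfeas := neg_SDP_neg_le_trace_mul C _ (hX.hadamard (hG.hadamard hG))
      fun i => by simp [hXd, transpose_mul_self_apply_self_eq_one hV]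
    have hX_bound := IsApproxConcavePoint.card_sub_two_mul_trace_le hconc hV hX hXd
    simp only [Fintype.card_fin] at hX_bound
    linarith
  have hp1 : (0 : ℝ) < p - 1 := by linarith
  rw [ge_iff_le, ← mul_le_mul_iff_of_pos_left hp1, mul_sub, mul_sub, ← mul_assoc,
    mul_one_div_cancel hp1.ne', one_mul]
  linarith

/-- Approximation quality of an ε-approximate concave point of the oblique-manifold
relaxation of the max-cut SDP. -/
theorem approx_concave_point_bound {n p : ℕ} (hn : 1 ≤ n) (hp : 2 ≤ p)
    (C : Matrix (Fin n) (Fin n) ℝ) (hC : C.IsSymm) (ε : ℝ) (hε : 0 ≤ ε)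
    (V : Matrix (Fin p) (Fin n) ℝ)
    (hV : ∀ i, ∑ j, (V j i) ^ 2 = 1)
    (hconc : ∀ U : Matrix (Fin p) (Fin n) ℝ,
      (∀ i, ∑ j, V j i * U j i = 0) →
      2 * (C * (Uᵀ * U)).trace - 2 * ∑ i, (Vᵀ * V * C) i i * (∑ j, (U j i) ^ 2)
        ≤ ε * ∑ j, ∑ i, (U j i) ^ 2) :
    (C * (Vᵀ * V)).trace
      ≥ SDP C - (1 / ((p : ℝ) - 1)) * (SDP C + SDP (-C)) - ((n : ℝ) / 2) * ε :=
  approx_concave_point_bound_general hp C ε V hV hconc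
end

section
/- Let n ≥ 1, let C ∈ ℝ^{n×n} be symmetric, and let p be a positive integer with p² ≥ 2n. If V* ∈ Ob(p,n) is a global maximizer of V ↦ tr(C VᵀV) over Ob(p,n), then tr(C (V*)ᵀV*) = SDP(C); that is, X* = (V*)ᵀV* is a global maximizer of tr(CX) over the set of symmetric positive semidefinite matrices with unit diagonal. -/
/-!
Write a feasible point of the SDP as `X = VᵀV` with `V` having `m` rows. While `m(m+1)/2 > n`,
the linear map `S ↦ diag (Vᵀ S V)` on symmetric `m × m` matrices has a nonzero kernel element
`S`, and along `Vᵀ (1 + t S) V` the diagonal stays fixed while the objective is affine in `t`.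
Diagonalizing `S = Q diag(μ) Qᵀ`, the step `t` in the non-decreasing direction at which some
`1 + t μ_k` vanishes gives a factor `diag(√(1 + t μ)) Qᵀ V` with a zero row, i.e. with `m - 1`
rows. Since `p² ≥ 2n`, this descends to `p` rows, so every SDP value is at most that of a point
of `Ob(p, n)`, hence at most that of `V*`.
-/

open Matrix

section

variable {ι κ : Type*} [Fintype κ]

section CommSemiring

variable {R : Type*} [CommSemiring R]

lemma transpose_mul_self_apply_self (V : Matrix κ ι R) (i : ι) :
    (Vᵀ * V) i i = ∑ k, V k i ^ 2 := by
  simp [mul_apply, sq]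

lemma transpose_mul_diagonal_mul_apply_self [DecidableEq κ] (V : Matrix κ ι R) (μ : κ → R)
    (i : ι) : (Vᵀ * diagonal μ * V) i i = ∑ k, μ k * V k i ^ 2 := by
  rw [mul_apply]
  simp only [mul_diagonal, transpose_apply]
  exact Finset.sum_congr rfl fun k _ => by ring

lemma transpose_mul_self_submatrix_succAbove {m : ℕ} (W : Matrix (Fin (m + 1)) ι R)
    {k : Fin (m + 1)} (hk : W k = 0) :
    (W.submatrix k.succAbove id)ᵀ * W.submatrix k.succAbove id = Wᵀ * W := by
  ext i j
  simp [mul_apply, Fin.sum_univ_succAbove _ k, hk]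

lemma exists_transpose_mul_self_eq_of_le {m p : ℕ} (h : m ≤ p) (V : Matrix (Fin m) ι R) :
    ∃ W : Matrix (Fin p) ι R, Wᵀ * W = Vᵀ * V := by
  induction p, h using Nat.le_induction with
  | base => exact ⟨V, rfl⟩
  | succ p _ ih =>
    obtain ⟨W, hW⟩ := ih
    refine ⟨Matrix.of (Fin.cons (0 : ι → R) fun k => W k), ?_⟩
    ext i j
    simpa [mul_apply, Fin.sum_univ_succ] using congr_fun₂ hW i j

end CommSemiring

lemma transpose_mul_self_diagonal_sqrt_mul [DecidableEq κ] {d : κ → ℝ} (hd : ∀ k, 0 ≤ d k)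
    (U : Matrix κ ι ℝ) :
    (diagonal (fun k => √(d k)) * U)ᵀ * (diagonal (fun k => √(d k)) * U) =
      Uᵀ * diagonal d * U := by
  rw [transpose_mul, diagonal_transpose, Matrix.mul_assoc, ← Matrix.mul_assoc (diagonal _),
    diagonal_mul_diagonal, ← Matrix.mul_assoc]
  congr 3
  exact funext fun k => Real.mul_self_sqrt (hd k)

lemma Matrix.IsSymm.exists_orthogonal_diagonal [DecidableEq κ] {S : Matrix κ κ ℝ}
    (hS : S.IsSymm) : ∃ (Q : Matrix κ κ ℝ) (μ : κ → ℝ), Q * Qᵀ = 1 ∧ S = Q * diagonal μ * Qᵀ := by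
  have hH : S.IsHermitian := isHermitian_iff_isSymm.2 hS
  refine ⟨hH.eigenvectorUnitary, hH.eigenvalues, ?_, ?_⟩
  · simpa [star_eq_conjTranspose, conjTranspose_eq_transpose_of_trivial] using
      Unitary.mul_star_self_of_mem hH.eigenvectorUnitary.2
  · conv_lhs => rw [hH.spectral_theorem]
    simp [star_eq_conjTranspose, conjTranspose_eq_transpose_of_trivial, RCLike.ofReal_real_eq_id]

/-- `card (Sym2 κ)` is the dimension of the space of symmetric `κ × κ` matrices. -/
lemma exists_isSymm_ne_zero_diag_transpose_mul_mul_eq_zero {K : Type*} [Field K] [Fintype ι]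
    (V : Matrix κ ι K) (h : Fintype.card ι < Fintype.card (Sym2 κ)) :
    ∃ S : Matrix κ κ K, S.IsSymm ∧ S ≠ 0 ∧ ∀ i, (Vᵀ * S * V) i i = 0 := by
  let L : (Sym2 κ → K) →ₗ[K] (ι → K) :=
    { toFun := fun f i => (Vᵀ * Matrix.of (fun a b => f s(a, b)) * V) i i
      map_add' := fun f g => by
        ext i
        change (Vᵀ * (of (fun a b => f s(a, b)) + of (fun a b => g s(a, b))) * V) i i = _
        rw [Matrix.mul_add, Matrix.add_mul, Matrix.add_apply]
        rfl
      map_smul' := fun c f => by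
        ext i
        change (Vᵀ * (c • of (fun a b => f s(a, b))) * V) i i = _
        rw [Matrix.mul_smul, Matrix.smul_mul, Matrix.smul_apply]
        rfl }
  obtain ⟨f, hf, hf0⟩ := Submodule.exists_mem_ne_zero_of_ne_bot
    (L.ker_ne_bot_of_finrank_lt (by simpa [Module.finrank_fintype_fun_eq_card] using h))
  refine ⟨Matrix.of fun a b => f s(a, b), ?_, fun hS => hf0 ?_, fun i => congrFun hf i⟩
  · ext a b
    simp [Sym2.eq_swap]
  · funext z
    induction z using Sym2.ind with
    | _ a b => exact congrFun (congrFun hS a) b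

lemma exists_neg_and_pos_of_sum_mul_sq_eq_zero {μ x : κ → ℝ} (h : ∑ k, μ k * x k ^ 2 = 0)
    {k : κ} (hμ : μ k ≠ 0) (hx : x k ≠ 0) : (∃ j, μ j < 0) ∧ ∃ j, 0 < μ j := by
  have hk : μ k * x k ^ 2 ≠ 0 := mul_ne_zero hμ (pow_ne_zero 2 hx)
  constructor
  · by_contra! hμ
    exact hk ((Finset.sum_eq_zero_iff_of_nonneg fun j _ => by have := hμ j; positivity).1 h k
      (Finset.mem_univ k))
  · by_contra! hμ
    exact hk ((Finset.sum_eq_zero_iff_of_nonpos fun j _ =>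
      mul_nonpos_of_nonpos_of_nonneg (hμ j) (sq_nonneg _)).1 h k (Finset.mem_univ k))

lemma exists_pos_boundary_step {μ : κ → ℝ} (hμ : ∃ k, μ k < 0) :
    ∃ t, 0 < t ∧ (∀ k, 0 ≤ 1 + t * μ k) ∧ ∃ k, 1 + t * μ k = 0 := by
  have : Nonempty κ := let ⟨k, _⟩ := hμ; ⟨k⟩
  obtain ⟨k, hk⟩ := Finite.exists_min μ
  have hneg : μ k < 0 := let ⟨j, hj⟩ := hμ; (hk j).trans_lt hj
  refine ⟨-(μ k)⁻¹, by simpa using hneg, fun j => ?_, k, ?_⟩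
  · rw [neg_mul, ← div_eq_inv_mul, ← sub_eq_add_neg, sub_nonneg, div_le_one_of_neg hneg]
    exact hk j
  · rw [neg_mul, inv_mul_cancel₀ hneg.ne]
    ring

lemma exists_boundary_step_mul_nonneg {μ : κ → ℝ} (hneg : ∃ k, μ k < 0) (hpos : ∃ k, 0 < μ k)
    (c : ℝ) : ∃ t, 0 ≤ t * c ∧ (∀ k, 0 ≤ 1 + t * μ k) ∧ ∃ k, 1 + t * μ k = 0 := by
  rcases le_total 0 c with hc | hc
  · obtain ⟨t, ht, hnn, hzero⟩ := exists_pos_boundary_step hneg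
    exact ⟨t, mul_nonneg ht.le hc, hnn, hzero⟩
  · obtain ⟨t, ht, hnn, k, hk⟩ := exists_pos_boundary_step (μ := -μ) (by simpa using hpos)
    exact ⟨-t, by nlinarith, fun j => by simpa using hnn j, k, by simpa using hk⟩

variable [Fintype ι]

theorem exists_zero_row_diag_eq_trace_le [DecidableEq κ] (C : Matrix ι ι ℝ)
    (U : Matrix κ ι ℝ) {μ : κ → ℝ} (hμ : μ ≠ 0) (hU : ∀ i, (Uᵀ * diagonal μ * U) i i = 0) :
    ∃ W : Matrix κ ι ℝ, (∃ k, W k = 0) ∧ (∀ i, (Wᵀ * W) i i = (Uᵀ * U) i i) ∧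
      (C * (Uᵀ * U)).trace ≤ (C * (Wᵀ * W)).trace := by
  obtain ⟨k, hk⟩ := Function.ne_iff.mp hμ
  by_cases hrow : U k = 0
  · exact ⟨U, ⟨k, hrow⟩, fun _ => rfl, le_rfl⟩
  obtain ⟨i, hi⟩ := Function.ne_iff.mp hrow
  obtain ⟨hneg, hpos⟩ := exists_neg_and_pos_of_sum_mul_sq_eq_zero
    ((transpose_mul_diagonal_mul_apply_self U μ i).symm.trans (hU i)) hk hi
  set M := Uᵀ * diagonal μ * U
  obtain ⟨t, hct, hnn, k', hk'⟩ := exists_boundary_step_mul_nonneg hneg hpos (C * M).trace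
  have hgram : (diagonal (fun j => √(1 + t * μ j)) * U)ᵀ *
      (diagonal (fun j => √(1 + t * μ j)) * U) = Uᵀ * U + t • M := by
    rw [transpose_mul_self_diagonal_sqrt_mul hnn,
      show diagonal (fun j => 1 + t * μ j) = 1 + t • diagonal μ by
        ext a b; by_cases hab : a = b <;> simp [hab]]
    simp only [M, Matrix.mul_add, Matrix.add_mul, Matrix.mul_one, Matrix.mul_smul,
      Matrix.smul_mul]
  refine ⟨diagonal (fun j => √(1 + t * μ j)) * U, ⟨k', ?_⟩, fun i => ?_, ?_⟩
  · ext i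
    simp [hk']
  · rw [hgram, Matrix.add_apply, Matrix.smul_apply, hU i, smul_zero, add_zero]
  · rw [hgram, Matrix.mul_add, trace_add, Matrix.mul_smul, trace_smul, smul_eq_mul]
    linarith

theorem exists_fewer_rows_diag_eq_trace_le (C : Matrix ι ι ℝ) {m : ℕ}
    (V : Matrix (Fin (m + 1)) ι ℝ) (h : Fintype.card ι < Fintype.card (Sym2 (Fin (m + 1)))) :
    ∃ V' : Matrix (Fin m) ι ℝ, (∀ i, (V'ᵀ * V') i i = (Vᵀ * V) i i) ∧
      (C * (Vᵀ * V)).trace ≤ (C * (V'ᵀ * V')).trace := by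
  obtain ⟨S, hS, hS0, hSV⟩ := exists_isSymm_ne_zero_diag_transpose_mul_mul_eq_zero V h
  obtain ⟨Q, μ, hQ, rfl⟩ := hS.exists_orthogonal_diagonal
  have hμ : μ ≠ 0 := by
    rintro rfl
    simp at hS0
  have hQV : (Qᵀ * V)ᵀ * (Qᵀ * V) = Vᵀ * V := by
    rw [transpose_mul, transpose_transpose, Matrix.mul_assoc, ← Matrix.mul_assoc Q, hQ,
      Matrix.one_mul]
  obtain ⟨W, ⟨k, hk⟩, hWdiag, hWtr⟩ := exists_zero_row_diag_eq_trace_le C (Qᵀ * V) hμ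
    (by simpa [transpose_mul, Matrix.mul_assoc] using hSV)
  refine ⟨W.submatrix k.succAbove id, ?_, ?_⟩ <;>
    rw [transpose_mul_self_submatrix_succAbove W hk, ← hQV]
  exacts [hWdiag, hWtr]

theorem exists_fin_rows_diag_eq_trace_le (C : Matrix ι ι ℝ) {p : ℕ}
    (hp : 2 * Fintype.card ι ≤ p ^ 2) {m : ℕ} (V : Matrix (Fin m) ι ℝ) :
    ∃ W : Matrix (Fin p) ι ℝ, (∀ i, (Wᵀ * W) i i = (Vᵀ * V) i i) ∧
      (C * (Vᵀ * V)).trace ≤ (C * (Wᵀ * W)).trace := by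
  have hpad : ∀ {m} (V : Matrix (Fin m) ι ℝ), m ≤ p → ∃ W : Matrix (Fin p) ι ℝ,
      (∀ i, (Wᵀ * W) i i = (Vᵀ * V) i i) ∧ (C * (Vᵀ * V)).trace ≤ (C * (Wᵀ * W)).trace := by
    intro m V hm
    obtain ⟨W, hW⟩ := exists_transpose_mul_self_eq_of_le hm V
    exact ⟨W, by simp [hW], by rw [hW]⟩
  induction m with
  | zero => exact hpad V (Nat.zero_le p)
  | succ m ih =>
    rcases le_or_gt (m + 1) p with hle | hlt
    · exact hpad V hle
    have hcard : Fintype.card ι < Fintype.card (Sym2 (Fin (m + 1))) := by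
      have hchoose : (m + 2).choose 2 * 2 = (m + 2) * (m + 1) := by
        rw [← Nat.add_one_mul_choose_eq, Nat.choose_one_right]
      rw [Sym2.card, Fintype.card_fin]
      nlinarith [Nat.pow_le_pow_left (Nat.le_of_lt_succ hlt) 2]
    obtain ⟨V', hV'diag, hV'tr⟩ := exists_fewer_rows_diag_eq_trace_le C V hcard
    obtain ⟨W, hWdiag, hWtr⟩ := ih V'
    exact ⟨W, fun i => (hWdiag i).trans (hV'diag i), hV'tr.trans hWtr⟩

open scoped MatrixOrder in
theorem Matrix.PosSemidef.exists_transpose_mul_self_diag_eq_trace_le (C : Matrix ι ι ℝ) {p : ℕ}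
    (hp : 2 * Fintype.card ι ≤ p ^ 2) {X : Matrix ι ι ℝ} (hX : X.PosSemidef) :
    ∃ W : Matrix (Fin p) ι ℝ, (∀ i, (Wᵀ * W) i i = X i i) ∧
      (C * X).trace ≤ (C * (Wᵀ * W)).trace := by
  classical
  obtain ⟨B, rfl⟩ := CStarAlgebra.nonneg_iff_eq_star_mul_self.mp hX.nonneg
  let e := Fintype.equivFin ι
  have hB : (B.submatrix e.symm id)ᵀ * B.submatrix e.symm id = star B * B := by
    rw [transpose_submatrix, submatrix_mul_equiv, submatrix_id_id, star_eq_conjTranspose,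
      conjTranspose_eq_transpose_of_trivial]
  simpa only [hB] using exists_fin_rows_diag_eq_trace_le C hp (B.submatrix e.symm id)

end

theorem global_maximizer_solves_sdp_general {n p : ℕ}
    (hpn : 2 * n ≤ p ^ 2)
    (C : Matrix (Fin n) (Fin n) ℝ)
    (Vstar : Matrix (Fin p) (Fin n) ℝ)
    (hVstar : ∀ i, ∑ j, (Vstar j i) ^ 2 = 1)
    (hmax : ∀ W : Matrix (Fin p) (Fin n) ℝ, (∀ i, ∑ j, (W j i) ^ 2 = 1) →
      (C * (Wᵀ * W)).trace ≤ (C * (Vstarᵀ * Vstar)).trace) :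
    (C * (Vstarᵀ * Vstar)).trace = SDP C ∧
    ∀ X : Matrix (Fin n) (Fin n) ℝ, X.PosSemidef → (∀ i, X i i = 1) →
      (C * X).trace ≤ (C * (Vstarᵀ * Vstar)).trace := by
  have hbound : ∀ X : Matrix (Fin n) (Fin n) ℝ, X.PosSemidef → (∀ i, X i i = 1) →
      (C * X).trace ≤ (C * (Vstarᵀ * Vstar)).trace := by
    intro X hX hdiag
    obtain ⟨W, hW, hle⟩ := hX.exists_transpose_mul_self_diag_eq_trace_le C (by simpa using hpn)
    exact hle.trans (hmax W fun i => by rw [← transpose_mul_self_apply_self, hW, hdiag])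
  have hfeas : (Vstarᵀ * Vstar).PosSemidef := by
    simpa [conjTranspose_eq_transpose_of_trivial] using posSemidef_conjTranspose_mul_self Vstar
  refine ⟨(IsGreatest.csSup_eq ?_).symm, hbound⟩
  refine ⟨⟨_, hfeas, fun i => ?_, rfl⟩, ?_⟩
  · rw [transpose_mul_self_apply_self, hVstar]
  · rintro t ⟨X, hX, hdiag, rfl⟩
    exact hbound X hX hdiag

/-- If `p² ≥ 2n` and `V*` is a global maximizer of `tr(C VᵀV)` over the oblique
manifold `Ob(p,n)`, then `(V*)ᵀV*` is a global maximizer of the max-cut SDP. -/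
theorem global_maximizer_solves_sdp {n p : ℕ} (hn : 1 ≤ n) (hp : 1 ≤ p)
    (hpn : 2 * n ≤ p ^ 2)
    (C : Matrix (Fin n) (Fin n) ℝ) (hC : C.IsSymm)
    (Vstar : Matrix (Fin p) (Fin n) ℝ)
    (hVstar : ∀ i, ∑ j, (Vstar j i) ^ 2 = 1)
    (hmax : ∀ W : Matrix (Fin p) (Fin n) ℝ, (∀ i, ∑ j, (W j i) ^ 2 = 1) →
      (C * (Wᵀ * W)).trace ≤ (C * (Vstarᵀ * Vstar)).trace) :
    (C * (Vstarᵀ * Vstar)).trace = SDP C ∧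
    ∀ X : Matrix (Fin n) (Fin n) ℝ, X.PosSemidef → (∀ i, X i i = 1) →
      (C * X).trace ≤ (C * (Vstarᵀ * Vstar)).trace :=
  global_maximizer_solves_sdp_general hpn C Vstar hVstar hmax
end

section
/- Let C, A_1, …, A_m ∈ ℝ^{n×n} be symmetric matrices and b ∈ ℝ^m, and suppose the feasible set 𝒞 = {X ∈ ℝ^{n×n} : X symmetric, X ⪰ 0, tr(A_i X) = b_i for i = 1,…,m} is nonempty and compact. Then there exists a global minimizer X* of X ↦ tr(CX) over 𝒞 whose rank r = rank(X*) satisfies r(r+1) ≤ 2m. -/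
/-!
Minimizers exist by compactness; take one, `X`, of least rank `r`, and factor `X = V Vᴴ` with
`V` of width `r`. If `r(r+1) > 2m`, the `m` linear conditions `tr(Aᵢ V Z Vᴴ) = 0` cannot cut the
`r(r+1)/2`-dimensional space of symmetric `r × r` matrices down to zero, so they have a solution
`Z ≠ 0`. For a suitable `s`, both `V (1 ± s Z) Vᴴ` are feasible and `1 + s Z` is singular.
As the objective is affine along the line `X + t V Z Vᴴ`, one of these two points is again a
minimizer, and its rank is less than `r`.
-/

open Matrix
open scoped ComplexOrder

section Sym2

variable {R : Type*} [Semiring R] {κ : Type*}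

def Matrix.ofSym2 : (Sym2 κ → R) →ₗ[R] Matrix κ κ R where
  toFun c := of fun i j => c s(i, j)
  map_add' _ _ := rfl
  map_smul' _ _ := rfl

theorem Matrix.isSymm_ofSym2 (c : Sym2 κ → R) : (ofSym2 c).IsSymm :=
  ext fun _ _ => congrArg c Sym2.eq_swap

theorem Matrix.ofSym2_injective :
    Function.Injective (ofSym2 : (Sym2 κ → R) → Matrix κ κ R) := by
  intro c c' h
  funext s
  induction s using Sym2.ind with
  | _ i j => exact congrFun (congrFun h i) j

end Sym2

theorem Matrix.exists_isSymm_ne_zero_of_finrank_lt {K : Type*} [Field K] {κ : Type*}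
    [Fintype κ] {M : Type*} [AddCommGroup M] [Module K M] [FiniteDimensional K M]
    (f : Matrix κ κ K →ₗ[K] M)
    (h : Module.finrank K M < (Fintype.card κ + 1).choose 2) :
    ∃ Z : Matrix κ κ K, Z.IsSymm ∧ Z ≠ 0 ∧ f Z = 0 := by
  have hdim : Module.finrank K M < Module.finrank K (Sym2 κ → K) := by
    rwa [Module.finrank_fintype_fun_eq_card, Sym2.card]
  obtain ⟨c, hc, hc0⟩ :=
    (Submodule.ne_bot_iff _).mp (LinearMap.ker_ne_bot_of_finrank_lt (f := f ∘ₗ ofSym2) hdim)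
  exact ⟨ofSym2 c, isSymm_ofSym2 c, (map_ne_zero_iff _ ofSym2_injective).mpr hc0, hc⟩

theorem Matrix.rank_lt_card_of_mulVec_eq_zero {K : Type*} [Field K] {n : Type*} [Fintype n]
    {M : Matrix n n K} {v : n → K} (hv : v ≠ 0) (hMv : M *ᵥ v = 0) :
    M.rank < Fintype.card n := by
  have hker : 0 < Module.finrank K (LinearMap.ker M.mulVecLin) :=
    Module.finrank_pos_iff_exists_ne_zero.mpr ⟨⟨v, hMv⟩, fun h => hv congr(Subtype.val $h)⟩
  have := LinearMap.finrank_range_add_finrank_ker M.mulVecLin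
  rw [Module.finrank_fintype_fun_eq_card] at this
  rw [rank]
  omega

section Spectral

variable {𝕜 : Type*} [RCLike 𝕜] {n : Type*} [Fintype n] [DecidableEq n]

theorem Matrix.PosSemidef.exists_eq_mul_conjTranspose {X : Matrix n n 𝕜} (hX : X.PosSemidef) :
    ∃ V : Matrix n (Fin X.rank) 𝕜, X = V * Vᴴ := by
  set d := hX.1.eigenvalues
  set U : Matrix n n 𝕜 := (hX.1.eigenvectorUnitary : Matrix n n 𝕜)
  have hspec : X = U * diagonal (fun k => (d k : 𝕜)) * Uᴴ := hX.1.spectral_theorem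
  let V : Matrix n {k // d k ≠ 0} 𝕜 := of fun i k => U i k * (√(d k) : ℝ)
  have hV : X = V * Vᴴ := by
    ext i j
    have hsq : ∀ k, (√(d k) : 𝕜) * (√(d k) : 𝕜) = d k := fun k => by
      rw [← RCLike.ofReal_mul, Real.mul_self_sqrt (hX.eigenvalues_nonneg k)]
    rw [hspec, mul_apply, mul_apply, ← Fintype.sum_subtype_add_sum_subtype (fun k => d k ≠ 0),
      Fintype.sum_eq_zero (fun k : {k // ¬ d k ≠ 0} => _) (fun k => by simp [not_not.mp k.2]),
      add_zero]
    refine Fintype.sum_congr _ _ fun k => ?_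
    simp only [mul_diagonal, conjTranspose_apply, of_apply, star_mul', RCLike.star_def,
      RCLike.conj_ofReal, V]
    rw [← hsq]
    ring
  let e : {k // d k ≠ 0} ≃ Fin X.rank :=
    Fintype.equivFinOfCardEq hX.1.rank_eq_card_non_zero_eigs.symm
  refine ⟨V.submatrix id e.symm, ?_⟩
  rw [conjTranspose_submatrix, submatrix_mul_equiv, submatrix_id_id, ← hV]

theorem Matrix.IsHermitian.posSemidef_one_add_smul {Z : Matrix n n 𝕜} (hZ : Z.IsHermitian)
    {t : ℝ} (ht : ∀ i, 0 ≤ 1 + t * hZ.eigenvalues i) : (1 + t • Z).PosSemidef := by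
  set U : Matrix n n 𝕜 := (hZ.eigenvectorUnitary : Matrix n n 𝕜)
  have hU : U * Uᴴ = 1 := mem_unitaryGroup_iff.mp hZ.eigenvectorUnitary.2
  have hspec : Z = U * diagonal (fun k => (hZ.eigenvalues k : 𝕜)) * Uᴴ := hZ.spectral_theorem
  have hdiag : diagonal (fun k => ((1 + t * hZ.eigenvalues k : ℝ) : 𝕜)) =
      1 + t • diagonal (fun k => (hZ.eigenvalues k : 𝕜)) := by
    ext i j
    rcases eq_or_ne i j with rfl | h
    · simp [RCLike.real_smul_eq_coe_mul]
    · simp [h]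
  have hconj :
      1 + t • Z = U * diagonal (fun k => ((1 + t * hZ.eigenvalues k : ℝ) : 𝕜)) * Uᴴ := by
    rw [hdiag, Matrix.mul_add, Matrix.add_mul, Matrix.mul_one, hU, Matrix.mul_smul,
      Matrix.smul_mul, ← hspec]
  have hD : (diagonal fun k => ((1 + t * hZ.eigenvalues k : ℝ) : 𝕜)).PosSemidef :=
    posSemidef_diagonal_iff.mpr fun k => RCLike.ofReal_nonneg.mpr (ht k)
  rw [hconj]
  exact hD.mul_mul_conjTranspose_same U

theorem Matrix.IsHermitian.exists_posSemidef_one_add_smul_rank_lt {Z : Matrix n n 𝕜}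
    (hZ : Z.IsHermitian) (h0 : Z ≠ 0) :
    ∃ s : ℝ, (1 + s • Z).PosSemidef ∧ (1 - s • Z).PosSemidef ∧
      (1 + s • Z).rank < Fintype.card n := by
  set μ := hZ.eigenvalues
  obtain ⟨i, hi⟩ : ∃ i, μ i ≠ 0 :=
    Function.ne_iff.mp (hZ.eigenvalues_eq_zero_iff.not.mpr h0)
  have : Nonempty n := ⟨i⟩
  obtain ⟨i₀, hi₀⟩ := Finite.exists_max fun i => |μ i|
  have hμ₀ : 0 < |μ i₀| := (abs_pos.mpr hi).trans_le (hi₀ i)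
  have hpsd : ∀ t : ℝ, |t| = |μ i₀|⁻¹ → (1 + t • Z).PosSemidef := fun t ht =>
    hZ.posSemidef_one_add_smul fun k => by
      have : |t * μ k| ≤ 1 := by
        rw [abs_mul, ht, inv_mul_le_iff₀ hμ₀, mul_one]
        exact hi₀ k
      linarith [neg_abs_le (t * μ k)]
  -- `μ i₀` has the largest modulus, so `1 ± s Z` has eigenvalues `1 ∓ μ k / μ i₀ ≥ 0`.
  set s := -(μ i₀)⁻¹
  have hs : |s| = |μ i₀|⁻¹ := by rw [abs_neg, abs_inv]
  refine ⟨s, hpsd s hs, ?_, ?_⟩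
  · rw [sub_eq_add_neg, ← neg_smul]
    exact hpsd (-s) (by rw [abs_neg, hs])
  · refine rank_lt_card_of_mulVec_eq_zero
      ((WithLp.ofLp_eq_zero 2).ne.2 <| hZ.eigenvectorBasis.orthonormal.ne_zero i₀) ?_
    rw [add_mulVec, one_mulVec, smul_mulVec, hZ.mulVec_eigenvectorBasis, smul_smul,
      neg_mul, inv_mul_cancel₀ (abs_pos.mp hμ₀), neg_one_smul, add_neg_cancel]

end Spectral

section SDP

variable {n ι : Type*} [Fintype n]

def sdpFeasibleSet (A : ι → Matrix n n ℝ) (b : ι → ℝ) : Set (Matrix n n ℝ) :=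
  {X | X.PosSemidef ∧ ∀ i, (A i * X).trace = b i}

theorem add_mem_sdpFeasibleSet {A : ι → Matrix n n ℝ} {b : ι → ℝ} {X W : Matrix n n ℝ}
    (hX : X ∈ sdpFeasibleSet A b) (hXW : (X + W).PosSemidef) (hW : ∀ i, (A i * W).trace = 0) :
    X + W ∈ sdpFeasibleSet A b :=
  ⟨hXW, fun i => by rw [Matrix.mul_add, trace_add, hX.2 i, hW i, add_zero]⟩

theorem exists_isMinOn_sdpFeasibleSet_rank_lt [DecidableEq n] [Fintype ι] {C : Matrix n n ℝ}
    {A : ι → Matrix n n ℝ} {b : ι → ℝ} {X : Matrix n n ℝ}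
    (hX : X ∈ sdpFeasibleSet A b)
    (hmin : IsMinOn (fun X => (C * X).trace) (sdpFeasibleSet A b) X)
    (hrank : 2 * Fintype.card ι < X.rank * (X.rank + 1)) :
    ∃ X' ∈ sdpFeasibleSet A b, IsMinOn (fun X => (C * X).trace) (sdpFeasibleSet A b) X' ∧
      X'.rank < X.rank := by
  obtain ⟨V, hV⟩ := hX.1.exists_eq_mul_conjTranspose
  let Φ : Matrix (Fin X.rank) (Fin X.rank) ℝ →ₗ[ℝ] ι → ℝ :=
    { toFun := fun Z i => (A i * (V * Z * Vᴴ)).trace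
      map_add' := fun _ _ => funext fun _ => by simp [Matrix.mul_add, Matrix.add_mul]
      map_smul' := fun _ _ => funext fun _ => by simp }
  have hdim : Module.finrank ℝ (ι → ℝ) < (Fintype.card (Fin X.rank) + 1).choose 2 := by
    have := (Nat.even_mul_succ_self X.rank).two_dvd
    rw [Module.finrank_fintype_fun_eq_card, Fintype.card_fin, Nat.choose_two_right,
      Nat.add_sub_cancel, mul_comm]
    omega
  obtain ⟨Z, hZ, hZ0, hΦZ⟩ := exists_isSymm_ne_zero_of_finrank_lt Φ hdim
  obtain ⟨s, hs_add, hs_sub, hsrank⟩ :=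
    (isHermitian_iff_isSymm.mpr hZ).exists_posSemidef_one_add_smul_rank_lt hZ0
  set W := V * Z * Vᴴ
  have hW : ∀ i, (A i * W).trace = 0 := congrFun hΦZ
  have hshift : ∀ t : ℝ, X + t • W = V * (1 + t • Z) * Vᴴ := fun t => by
    rw [Matrix.mul_add, Matrix.add_mul, Matrix.mul_one, Matrix.mul_smul, Matrix.smul_mul, ← hV]
  have hmem : ∀ t : ℝ, (1 + t • Z).PosSemidef → X + t • W ∈ sdpFeasibleSet A b :=
    fun t ht => add_mem_sdpFeasibleSet hX (hshift t ▸ ht.mul_mul_conjTranspose_same V) fun i => by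
      rw [Matrix.mul_smul, trace_smul, hW i, smul_zero]
  have hobj : ∀ t : ℝ, (C * (X + t • W)).trace = (C * X).trace + t * (C * W).trace :=
    fun t => by rw [Matrix.mul_add, trace_add, Matrix.mul_smul, trace_smul, smul_eq_mul]
  have hdescent : (C * (X + s • W)).trace ≤ (C * X).trace := by
    have := isMinOn_iff.mp hmin _ (hmem (-s) (by rw [neg_smul, ← sub_eq_add_neg]; exact hs_sub))
    rw [hobj] at this ⊢
    linarith
  refine ⟨X + s • W, hmem s hs_add,
    isMinOn_iff.mpr fun Y hY => hdescent.trans (isMinOn_iff.mp hmin Y hY), ?_⟩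
  calc (X + s • W).rank = (V * (1 + s • Z) * Vᴴ).rank := by rw [hshift]
    _ ≤ (V * (1 + s • Z)).rank := rank_mul_le_left _ _
    _ ≤ (1 + s • Z).rank := rank_mul_le_right _ _
    _ < Fintype.card (Fin X.rank) := hsrank
    _ = X.rank := Fintype.card_fin _

end SDP

theorem exists_low_rank_sdp_minimizer_general {n m : ℕ}
    (C : Matrix (Fin n) (Fin n) ℝ)
    (A : Fin m → Matrix (Fin n) (Fin n) ℝ)
    (b : Fin m → ℝ)
    (S : Set (Matrix (Fin n) (Fin n) ℝ))
    (hS : S = {X | X.PosSemidef ∧ ∀ i, (A i * X).trace = b i})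
    (hne : S.Nonempty) (hcomp : IsCompact S) :
    ∃ Xstar ∈ S, (∀ X ∈ S, (C * Xstar).trace ≤ (C * X).trace) ∧
      Xstar.rank * (Xstar.rank + 1) ≤ 2 * m := by
  change S = sdpFeasibleSet A b at hS
  subst hS
  have hcont : Continuous fun X : Matrix (Fin n) (Fin n) ℝ => (C * X).trace :=
    (continuous_const.matrix_mul continuous_id).matrix_trace
  obtain ⟨X₀, hX₀, hX₀min⟩ := hcomp.exists_isMinOn hne hcont.continuousOn
  obtain ⟨X, ⟨hX, hXmin⟩, hXrank⟩ := (measure Matrix.rank).wf.has_min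
    {X | X ∈ sdpFeasibleSet A b ∧ IsMinOn (fun X => (C * X).trace) (sdpFeasibleSet A b) X}
    ⟨X₀, hX₀, hX₀min⟩
  refine ⟨X, hX, isMinOn_iff.mp hXmin, not_lt.mp fun hlt => ?_⟩
  obtain ⟨X', hX', hX'min, hlt'⟩ :=
    exists_isMinOn_sdpFeasibleSet_rank_lt hX hXmin (by rwa [Fintype.card_fin])
  exact hXrank X' ⟨hX', hX'min⟩ hlt'

/-- If the feasible set of an SDP is nonempty and compact, there exists a global
minimizer `X*` of `tr(C X)` whose rank `r` satisfies `r(r+1) ≤ 2m`. -/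
theorem exists_low_rank_sdp_minimizer {n m : ℕ}
    (C : Matrix (Fin n) (Fin n) ℝ) (hC : C.IsSymm)
    (A : Fin m → Matrix (Fin n) (Fin n) ℝ) (hA : ∀ i, (A i).IsSymm)
    (b : Fin m → ℝ)
    (S : Set (Matrix (Fin n) (Fin n) ℝ))
    (hS : S = {X | X.PosSemidef ∧ ∀ i, (A i * X).trace = b i})
    (hne : S.Nonempty) (hcomp : IsCompact S) :
    ∃ Xstar ∈ S, (∀ X ∈ S, (C * Xstar).trace ≤ (C * X).trace) ∧
      Xstar.rank * (Xstar.rank + 1) ≤ 2 * m :=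
  exists_low_rank_sdp_minimizer_general C A b S hS hne hcomp
end

section
/- Let X ∈ ℝ^{n×p} satisfy XᵀX = I_p, let D ∈ ℝ^{n×p}, τ ∈ ℝ, and set P_X = I_n − (1/2)XXᵀ, U = [P_X D, X] ∈ ℝ^{n×2p}, V = [X, −P_X D] ∈ ℝ^{n×2p}. If the matrix I_{2p} + (τ/2)VᵀU is invertible, then the Cayley-transform retraction point Y = X − τ U (I_{2p} + (τ/2)VᵀU)^{-1} Vᵀ X satisfies YᵀY = I_p, i.e., Y lies on the Stiefel manifold. -/
/-!
With `W = (τ / 2) • (U * Vᵀ)`, the matrix `U * Vᵀ = P_X D Xᵀ - X (P_X D)ᵀ` is skew-symmetric.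
The push-through identity `(1 + c A B) A = A (1 + c B A)` shows that
`Q = 1 - τ U (1 + (τ/2) Vᵀ U)⁻¹ Vᵀ` satisfies `(1 + W) Q = 1 - W = Q (1 + W)`, so `Q` is the Cayley
transform of `W` and `Y = Q X`; invertibility of `1 + W` follows from that of the small matrix by
the Weinstein–Aronszajn identity. The Cayley transform of a skew-symmetric matrix is orthogonal,
hence `Yᵀ Y = Xᵀ X = 1`.
-/

open Matrix

namespace Matrix

theorem fromCols_mul_transpose_fromCols_neg {m n R : Type*} [Fintype n] [Ring R]
    (A B : Matrix m n R) :
    fromCols A B * (fromCols B (-A))ᵀ = A * Bᵀ - B * Aᵀ := by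
  rw [transpose_fromCols, fromCols_mul_fromRows, transpose_neg, Matrix.mul_neg, sub_eq_add_neg]

variable {m k R : Type*} [Fintype m] [DecidableEq m] [Fintype k] [DecidableEq k] [CommRing R]

theorem transpose_mul_self_eq_one_of_cayley {W Q : Matrix m m R} (hW : Wᵀ = -W)
    (hunit : IsUnit (1 + W)) (hleft : (1 + W) * Q = 1 - W) (hright : Q * (1 + W) = 1 - W) :
    Qᵀ * Q = 1 := by
  have hsub : (1 - W : Matrix m m R) = (1 + W)ᵀ := by
    rw [transpose_add, transpose_one, hW, sub_eq_add_neg]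
  have hunit' : IsUnit (1 - W) := by
    rw [hsub, isUnit_iff_isUnit_det, det_transpose, ← isUnit_iff_isUnit_det]
    exact hunit
  have hleftT : (1 - W) * Qᵀ = 1 + W := by
    rw [hsub, ← transpose_mul, hright, hsub, transpose_transpose]
  refine hunit'.mul_left_cancel ?_
  rw [← Matrix.mul_assoc, hleftT, hleft, Matrix.mul_one]

theorem isUnit_one_add_smul_mul_comm {A : Matrix m k R} {B : Matrix k m R} {c : R}
    (h : IsUnit (1 + c • (B * A))) : IsUnit (1 + c • (A * B)) := by
  rw [isUnit_iff_isUnit_det, ← smul_mul, det_one_add_mul_comm, Matrix.mul_smul,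
    ← isUnit_iff_isUnit_det]
  exact h

theorem one_add_smul_mul_mul_comm (A : Matrix m k R) (B : Matrix k m R) (c : R) :
    (1 + c • (A * B)) * A = A * (1 + c • (B * A)) := by
  simp only [Matrix.add_mul, Matrix.mul_add, Matrix.one_mul, Matrix.mul_one, smul_mul,
    Matrix.mul_smul, Matrix.mul_assoc]

theorem mul_one_add_smul_mul_comm (A : Matrix m k R) (B : Matrix k m R) (c : R) :
    B * (1 + c • (A * B)) = (1 + c • (B * A)) * B := by
  simp only [Matrix.add_mul, Matrix.mul_add, Matrix.one_mul, Matrix.mul_one, smul_mul,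
    Matrix.mul_smul, Matrix.mul_assoc]

/-- `(1 + c • (A * B))⁻¹ * (1 - c • (A * B))`, computed as in Wen–Yin by inverting only a
`k × k` matrix. -/
noncomputable def lowRankCayley (A : Matrix m k R) (B : Matrix k m R) (c : R) : Matrix m m R :=
  1 - (2 * c) • (A * (1 + c • (B * A))⁻¹ * B)

theorem one_add_smul_mul_mul_lowRankCayley {A : Matrix m k R} {B : Matrix k m R} {c : R}
    (h : IsUnit (1 + c • (B * A))) :
    (1 + c • (A * B)) * lowRankCayley A B c = 1 - c • (A * B) := by
  have hdet := (isUnit_iff_isUnit_det _).mp h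
  have key : (1 + c • (A * B)) * (A * (1 + c • (B * A))⁻¹ * B) = A * B := by
    rw [← Matrix.mul_assoc, ← Matrix.mul_assoc, one_add_smul_mul_mul_comm,
      Matrix.mul_nonsing_inv_cancel_right _ _ hdet]
  rw [lowRankCayley, Matrix.mul_sub, Matrix.mul_one, Matrix.mul_smul, key, mul_smul, two_smul]
  abel

theorem lowRankCayley_mul_one_add_smul_mul {A : Matrix m k R} {B : Matrix k m R} {c : R}
    (h : IsUnit (1 + c • (B * A))) :
    lowRankCayley A B c * (1 + c • (A * B)) = 1 - c • (A * B) := by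
  have hdet := (isUnit_iff_isUnit_det _).mp h
  have key : A * (1 + c • (B * A))⁻¹ * B * (1 + c • (A * B)) = A * B := by
    rw [Matrix.mul_assoc, Matrix.mul_assoc, mul_one_add_smul_mul_comm,
      Matrix.nonsing_inv_mul_cancel_left _ _ hdet]
  rw [lowRankCayley, Matrix.sub_mul, Matrix.one_mul, Matrix.smul_mul, key, mul_smul, two_smul]
  abel

end Matrix

theorem cayley_retraction_feasible_general {n p : ℕ}
    (X D : Matrix (Fin n) (Fin p) ℝ) (hX : Xᵀ * X = 1) (τ : ℝ)
    (PX : Matrix (Fin n) (Fin n) ℝ)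
    (U V : Matrix (Fin n) (Fin p ⊕ Fin p) ℝ)
    (hU : U = Matrix.fromCols (PX * D) X)
    (hV : V = Matrix.fromCols X (-(PX * D)))
    (hinv : IsUnit ((1 : Matrix (Fin p ⊕ Fin p) (Fin p ⊕ Fin p) ℝ)
      + (τ / 2) • (Vᵀ * U)))
    (Y : Matrix (Fin n) (Fin p) ℝ)
    (hY : Y = X - τ • (U * ((1 : Matrix (Fin p ⊕ Fin p) (Fin p ⊕ Fin p) ℝ)
      + (τ / 2) • (Vᵀ * U))⁻¹ * (Vᵀ * X))) :
    Yᵀ * Y = 1 := by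
  have hskew : ((τ / 2) • (U * Vᵀ))ᵀ = -((τ / 2) • (U * Vᵀ)) := by
    rw [hU, hV, fromCols_mul_transpose_fromCols_neg]
    simp only [transpose_smul, transpose_sub, transpose_mul, transpose_transpose, ← smul_neg,
      neg_sub]
  have hQ : (lowRankCayley U Vᵀ (τ / 2))ᵀ * lowRankCayley U Vᵀ (τ / 2) = 1 :=
    transpose_mul_self_eq_one_of_cayley hskew (isUnit_one_add_smul_mul_comm hinv)
      (one_add_smul_mul_mul_lowRankCayley hinv) (lowRankCayley_mul_one_add_smul_mul hinv)
  have hYQ : Y = lowRankCayley U Vᵀ (τ / 2) * X := by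
    rw [hY, lowRankCayley, Matrix.sub_mul, Matrix.one_mul, Matrix.smul_mul,
      mul_div_cancel₀ τ two_ne_zero, Matrix.mul_assoc _ Vᵀ X]
  rw [hYQ, transpose_mul, Matrix.mul_assoc, ← Matrix.mul_assoc _ _ X, hQ, Matrix.one_mul, hX]

/-- Feasibility of the Wen–Yin Cayley transform retraction on the Stiefel
manifold: the retraction point `Y` satisfies `YᵀY = I`. -/
theorem cayley_retraction_feasible {n p : ℕ}
    (X D : Matrix (Fin n) (Fin p) ℝ) (hX : Xᵀ * X = 1) (τ : ℝ)
    (PX : Matrix (Fin n) (Fin n) ℝ) (hPX : PX = 1 - (1 / 2 : ℝ) • (X * Xᵀ))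
    (U V : Matrix (Fin n) (Fin p ⊕ Fin p) ℝ)
    (hU : U = Matrix.fromCols (PX * D) X)
    (hV : V = Matrix.fromCols X (-(PX * D)))
    (hinv : IsUnit ((1 : Matrix (Fin p ⊕ Fin p) (Fin p ⊕ Fin p) ℝ)
      + (τ / 2) • (Vᵀ * U)))
    (Y : Matrix (Fin n) (Fin p) ℝ)
    (hY : Y = X - τ • (U * ((1 : Matrix (Fin p ⊕ Fin p) (Fin p ⊕ Fin p) ℝ)
      + (τ / 2) • (Vᵀ * U))⁻¹ * (Vᵀ * X))) :
    Yᵀ * Y = 1 :=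
  cayley_retraction_feasible_general X D hX τ PX U V hU hV hinv Y hY
end

section
/- Let ϱ ∈ [0,1), and let sequences (Q_k), (C_k), (f_k), (a_k) of real numbers satisfy Q_0 = 1, Q_{k+1} = ϱQ_k + 1, C_0 = f_0, C_{k+1} = (ϱ Q_k C_k + f_{k+1})/Q_{k+1}, together with the nonmonotone Armijo-type decrease condition f_{k+1} ≤ C_k − a_k with a_k ≥ 0 for all k ≥ 0. If inf_k C_k > −∞, then: (i) the sequence (C_k) is nonincreasing; (ii) Σ_{k=0}^∞ a_k ≤ (C_0 − inf_k C_k)/(1−ϱ) < ∞; in particular a_k → 0. -/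
open Filter

/-- Properties of the reference values of the nonmonotone line search: the
sequence `C_k` is nonincreasing, and the Armijo decrease quantities `a_k` are
summable with `∑ a_k ≤ (C_0 − inf_k C_k)/(1 − ϱ)`; in particular `a_k → 0`. -/
theorem nonmonotone_reference_values (ϱ : ℝ) (hϱ0 : 0 ≤ ϱ) (hϱ1 : ϱ < 1)
    (Q C f a : ℕ → ℝ)
    (hQ0 : Q 0 = 1) (hQ : ∀ k, Q (k + 1) = ϱ * Q k + 1)
    (hC0 : C 0 = f 0) (hC : ∀ k, C (k + 1) = (ϱ * Q k * C k + f (k + 1)) / Q (k + 1))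
    (ha : ∀ k, 0 ≤ a k) (hdec : ∀ k, f (k + 1) ≤ C k - a k)
    (hbdd : BddBelow (Set.range C)) :
    (∀ k, C (k + 1) ≤ C k) ∧
    Summable a ∧ (∑' k, a k ≤ (C 0 - ⨅ k, C k) / (1 - ϱ)) ∧
    Tendsto a atTop (nhds 0) := by
  have h1ϱ : 0 < 1 - ϱ := by linarith
  -- Q k ≥ 1
  have hQ1 : ∀ k, 1 ≤ Q k := by
    intro k
    induction k with
    | zero => simp [hQ0]
    | succ n ih =>
      have : 0 ≤ ϱ * Q n := mul_nonneg hϱ0 (by linarith)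
      rw [hQ n]; linarith
  have hQpos : ∀ k, 0 < Q k := fun k => lt_of_lt_of_le one_pos (hQ1 k)
  -- Q k ≤ 1/(1-ϱ)
  have hQub : ∀ k, Q k ≤ 1 / (1 - ϱ) := by
    intro k
    induction k with
    | zero =>
      rw [hQ0, le_div_iff₀ h1ϱ]; nlinarith
    | succ n ih =>
      rw [hQ n, le_div_iff₀ h1ϱ]
      have h2 : ϱ * Q n ≤ ϱ * (1 / (1 - ϱ)) := mul_le_mul_of_nonneg_left ih hϱ0
      have h3 : ϱ * (1 / (1 - ϱ)) = ϱ / (1 - ϱ) := by ring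
      rw [h3] at h2
      have h4 : ϱ / (1 - ϱ) * (1 - ϱ) = ϱ := div_mul_cancel₀ _ (ne_of_gt h1ϱ)
      nlinarith
  -- key inequality
  have hkey : ∀ k, a k ≤ Q (k + 1) * (C k - C (k + 1)) := by
    intro k
    have hCk : C (k + 1) * Q (k + 1) = ϱ * Q k * C k + f (k + 1) := by
      rw [hC k, div_mul_cancel₀ _ (ne_of_gt (hQpos (k + 1)))]
    have hQk : ϱ * Q k = Q (k + 1) - 1 := by rw [hQ k]; ring
    rw [hQk] at hCk
    have := hdec k
    nlinarith [hQpos (k + 1)]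
  have hmono : ∀ k, C (k + 1) ≤ C k := by
    intro k
    have := hkey k
    have h0 := ha k
    nlinarith [hQpos (k + 1)]
  -- a k ≤ (C k - C (k+1)) / (1 - ϱ)
  have hak : ∀ k, a k ≤ (C k - C (k + 1)) / (1 - ϱ) := by
    intro k
    rw [le_div_iff₀ h1ϱ]
    have h1 : Q (k + 1) * (C k - C (k + 1)) ≤ (1 / (1 - ϱ)) * (C k - C (k + 1)) :=
      mul_le_mul_of_nonneg_right (hQub (k + 1)) (by linarith [hmono k])
    have h2 : (1 / (1 - ϱ)) * (C k - C (k + 1)) * (1 - ϱ) = C k - C (k + 1) := by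
      field_simp
    nlinarith [hkey k]
  -- the infimum
  have hinf : ∀ n, ⨅ k, C k ≤ C n := fun n => ciInf_le hbdd n
  -- partial sums bound
  have hsum : ∀ n, ∑ k ∈ Finset.range n, a k ≤ (C 0 - ⨅ k, C k) / (1 - ϱ) := by
    intro n
    have htel : ∑ k ∈ Finset.range n, (C k - C (k + 1)) / (1 - ϱ)
        = (C 0 - C n) / (1 - ϱ) := by
      rw [← Finset.sum_div]
      congr 1
      have : ∑ k ∈ Finset.range n, (C k - C (k + 1)) = C 0 - C n := by
        induction n with
        | zero => simp
        | succ m ih => rw [Finset.sum_range_succ, ih]; ring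
      exact this
    calc ∑ k ∈ Finset.range n, a k
        ≤ ∑ k ∈ Finset.range n, (C k - C (k + 1)) / (1 - ϱ) :=
          Finset.sum_le_sum fun k _ => hak k
      _ = (C 0 - C n) / (1 - ϱ) := htel
      _ ≤ (C 0 - ⨅ k, C k) / (1 - ϱ) := by
          gcongr
          exact hinf n
  have hsummable : Summable a := summable_of_sum_range_le ha hsum
  exact ⟨hmono, hsummable, Summable.tsum_le_of_sum_range_le hsummable hsum,
    hsummable.tendsto_atTop_zero⟩
end

section
/- Let n ≥ k ≥ 1 and Y ∈ ℝ^{n×k}. Then Y satisfies the three conditions YᵀY = I_k, (YYᵀ)𝟙 = 𝟙 (where 𝟙 ∈ ℝ^n is the all-ones vector), and Y ≥ 0 entrywise, if and only if there exists a partition of {1,…,n} into nonempty disjoint sets S_1, …, S_k with S_1 ∪ ⋯ ∪ S_k = {1,…,n} such that Y_{ij} = 1/√(|S_j|) if i ∈ S_j and Y_{ij} = 0 otherwise. -/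
/-!
Nonnegativity turns the orthogonality of two columns of `Y` into disjointness of their supports
`S_j`. A row then meets only one support, so with `c_j` the `j`-th column sum the row condition
reads `Y i j * c_j = 1` on `S_j`; hence `|S_j| = ∑_{i ∈ S_j} Y i j * c_j = c_j ^ 2`, and
`Y i j = 1 / √|S_j|` there. The converse is a direct computation.
-/

open Matrix Finset

variable {ι κ : Type*}

lemma Matrix.mul_transpose_mulVec_one_apply [Fintype ι] [Fintype κ] (Y : Matrix ι κ ℝ)
    (i : ι) :
    ((Y * Yᵀ) *ᵥ 1) i = ∑ j, Y i j * ∑ l, Y l j := by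
  rw [← mulVec_mulVec]
  simp [mulVec, dotProduct]

section ClusterMatrix

variable [DecidableEq ι] (S : κ → Finset ι)

noncomputable def clusterMatrix : Matrix ι κ ℝ :=
  fun i j => if i ∈ S j then 1 / √(#(S j)) else 0

lemma clusterMatrix_nonneg (i : ι) (j : κ) : 0 ≤ clusterMatrix S i j := by
  unfold clusterMatrix
  split_ifs <;> positivity

lemma clusterMatrix_mul_sqrt_card (i : ι) (j : κ) :
    clusterMatrix S i j * √(#(S j)) = if i ∈ S j then 1 else 0 := by
  unfold clusterMatrix
  split_ifs with hi
  · have : 0 < √(#(S j) : ℝ) := Real.sqrt_pos.2 (by exact_mod_cast card_pos.2 ⟨i, hi⟩)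
    field_simp
  · exact zero_mul _

variable [Fintype ι]

lemma sum_clusterMatrix_col (j : κ) : ∑ i, clusterMatrix S i j = √(#(S j)) := by
  simp [clusterMatrix, Finset.sum_ite_mem, ← div_eq_mul_inv, Real.div_sqrt]

variable {S}

lemma transpose_clusterMatrix_mul_self [DecidableEq κ] (hne : ∀ j, (S j).Nonempty)
    (hdisj : ∀ j₁ j₂, j₁ ≠ j₂ → Disjoint (S j₁) (S j₂)) :
    (clusterMatrix S)ᵀ * clusterMatrix S = 1 := by
  ext j₁ j₂
  simp only [mul_apply, transpose_apply, one_apply]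
  split_ifs with hj
  · subst hj
    have hcard : (#(S j₁) : ℝ) ≠ 0 := by exact_mod_cast (card_pos.2 (hne j₁)).ne'
    have hsq : ∀ i, clusterMatrix S i j₁ * clusterMatrix S i j₁ =
        if i ∈ S j₁ then 1 / (#(S j₁) : ℝ) else 0 := fun i => by
      unfold clusterMatrix
      split_ifs
      · rw [one_div_mul_one_div, Real.mul_self_sqrt (Nat.cast_nonneg _)]
      · exact zero_mul _
    simp [hsq, Finset.sum_ite_mem, hcard]
  · refine sum_eq_zero fun i _ => ?_
    unfold clusterMatrix
    split_ifs with h₁ h₂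
    · exact absurd h₂ (disjoint_left.1 (hdisj j₁ j₂ hj) h₁)
    all_goals simp

lemma clusterMatrix_mul_transpose_mulVec_one [Fintype κ]
    (hdisj : ∀ j₁ j₂, j₁ ≠ j₂ → Disjoint (S j₁) (S j₂))
    (hcover : ∀ i, ∃ j, i ∈ S j) :
    (clusterMatrix S * (clusterMatrix S)ᵀ) *ᵥ 1 = 1 := by
  funext i
  obtain ⟨j, hj⟩ := hcover i
  rw [mul_transpose_mulVec_one_apply, Pi.one_apply]
  simp only [sum_clusterMatrix_col, clusterMatrix_mul_sqrt_card]
  rw [sum_eq_single j (fun j' _ hj' => if_neg fun h => disjoint_left.1 (hdisj j' j hj') h hj)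
    (by simp), if_pos hj]

end ClusterMatrix

section Feasible

variable [Fintype ι] {Y : Matrix ι κ ℝ}

noncomputable def colSupport (Y : Matrix ι κ ℝ) (j : κ) : Finset ι := {i | Y i j ≠ 0}

lemma mem_colSupport {i : ι} {j : κ} : i ∈ colSupport Y j ↔ Y i j ≠ 0 := by
  simp [colSupport]

lemma exists_mem_colSupport [Fintype κ] (hrow : (Y * Yᵀ) *ᵥ 1 = 1) (i : ι) :
    ∃ j, i ∈ colSupport Y j := by
  by_contra! h
  have := congrFun hrow i
  simp_all [mul_transpose_mulVec_one_apply, mem_colSupport]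

variable [DecidableEq κ]

lemma colSupport_nonempty (hYY : Yᵀ * Y = 1) (j : κ) : (colSupport Y j).Nonempty := by
  by_contra! h
  have := congrFun₂ hYY j j
  simp_all [mul_apply, Finset.eq_empty_iff_forall_notMem, mem_colSupport]

lemma mul_eq_zero_of_transpose_mul_self_eq_one (hY : ∀ i j, 0 ≤ Y i j) (hYY : Yᵀ * Y = 1)
    {j₁ j₂ : κ} (hj : j₁ ≠ j₂) (i : ι) : Y i j₁ * Y i j₂ = 0 := by
  have horth : ∑ i, Y i j₁ * Y i j₂ = 0 := by
    simpa [mul_apply, one_apply, hj] using congrFun₂ hYY j₁ j₂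
  exact (sum_eq_zero_iff_of_nonneg fun i _ => mul_nonneg (hY i j₁) (hY i j₂)).1 horth i
    (mem_univ i)

lemma disjoint_colSupport (hY : ∀ i j, 0 ≤ Y i j) (hYY : Yᵀ * Y = 1) {j₁ j₂ : κ}
    (hj : j₁ ≠ j₂) : Disjoint (colSupport Y j₁) (colSupport Y j₂) :=
  disjoint_left.2 fun i h₁ h₂ =>
    mul_ne_zero (mem_colSupport.1 h₁) (mem_colSupport.1 h₂)
      (mul_eq_zero_of_transpose_mul_self_eq_one hY hYY hj i)

variable [Fintype κ]

lemma mul_sum_col_eq_one (hY : ∀ i j, 0 ≤ Y i j) (hYY : Yᵀ * Y = 1)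
    (hrow : (Y * Yᵀ) *ᵥ 1 = 1) {i : ι} {j : κ} (hij : Y i j ≠ 0) :
    Y i j * ∑ l, Y l j = 1 := by
  have hother : ∀ j' ≠ j, Y i j' * ∑ l, Y l j' = 0 := fun j' hj' => by
    rw [(mul_eq_zero.1 (mul_eq_zero_of_transpose_mul_self_eq_one hY hYY hj' i)).resolve_right
      hij, zero_mul]
  have := congrFun hrow i
  rwa [mul_transpose_mulVec_one_apply, sum_eq_single j (fun j' _ => hother j') (by simp)]
    at this

lemma card_colSupport (hY : ∀ i j, 0 ≤ Y i j) (hYY : Yᵀ * Y = 1)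
    (hrow : (Y * Yᵀ) *ᵥ 1 = 1) (j : κ) :
    (#(colSupport Y j) : ℝ) = (∑ l, Y l j) ^ 2 :=
  calc (#(colSupport Y j) : ℝ)
      = ∑ i ∈ colSupport Y j, Y i j * ∑ l, Y l j := by
        rw [sum_congr rfl fun i hi => mul_sum_col_eq_one hY hYY hrow (mem_colSupport.1 hi)]
        simp
    _ = (∑ l, Y l j) ^ 2 := by
        rw [← sum_mul, colSupport, sum_filter_ne_zero, sq]

lemma eq_clusterMatrix_colSupport [DecidableEq ι] (hY : ∀ i j, 0 ≤ Y i j) (hYY : Yᵀ * Y = 1)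
    (hrow : (Y * Yᵀ) *ᵥ 1 = 1) : Y = clusterMatrix (colSupport Y) := by
  ext i j
  have hsqrt : √(#(colSupport Y j) : ℝ) = ∑ l, Y l j := by
    rw [card_colSupport hY hYY hrow, Real.sqrt_sq (sum_nonneg fun l _ => hY l j)]
  by_cases hij : Y i j = 0
  · rw [hij, clusterMatrix.eq_def, if_neg (not_not.2 hij ∘ mem_colSupport.1)]
  · rw [clusterMatrix.eq_def, if_pos (mem_colSupport.2 hij), hsqrt,
      eq_one_div_of_mul_eq_one_left (mul_sum_col_eq_one hY hYY hrow hij)]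

end Feasible

theorem kmeans_feasible_iff_partition_general {n k : ℕ}
    (Y : Matrix (Fin n) (Fin k) ℝ) :
    (Yᵀ * Y = 1 ∧ (Y * Yᵀ) *ᵥ (fun _ => (1 : ℝ)) = (fun _ => (1 : ℝ)) ∧
      ∀ i j, 0 ≤ Y i j)
    ↔ ∃ S : Fin k → Finset (Fin n),
        (∀ j, (S j).Nonempty) ∧
        (∀ j₁ j₂, j₁ ≠ j₂ → Disjoint (S j₁) (S j₂)) ∧
        (∀ i, ∃ j, i ∈ S j) ∧
        (∀ i j, Y i j = if i ∈ S j then 1 / Real.sqrt ((S j).card) else 0) := by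
  constructor
  · rintro ⟨hYY, hrow, hY⟩
    exact ⟨colSupport Y, colSupport_nonempty hYY, fun _ _ => disjoint_colSupport hY hYY,
      exists_mem_colSupport hrow,
      fun i j => congrFun₂ (eq_clusterMatrix_colSupport hY hYY hrow) i j⟩
  · rintro ⟨S, hne, hdisj, hcover, hYS⟩
    obtain rfl : Y = clusterMatrix S := ext hYS
    exact ⟨transpose_clusterMatrix_mul_self hne hdisj,
      clusterMatrix_mul_transpose_mulVec_one hdisj hcover, clusterMatrix_nonneg S⟩

/-- The feasible set of the matrix reformulation of k-means clustering consists
exactly of the column-normalized indicator matrices of partitions of `{1,…,n}`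
into `k` nonempty clusters. -/
theorem kmeans_feasible_iff_partition {n k : ℕ} (hk : 1 ≤ k) (hnk : k ≤ n)
    (Y : Matrix (Fin n) (Fin k) ℝ) :
    (Yᵀ * Y = 1 ∧ (Y * Yᵀ) *ᵥ (fun _ => (1 : ℝ)) = (fun _ => (1 : ℝ)) ∧
      ∀ i j, 0 ≤ Y i j)
    ↔ ∃ S : Fin k → Finset (Fin n),
        (∀ j, (S j).Nonempty) ∧
        (∀ j₁ j₂, j₁ ≠ j₂ → Disjoint (S j₁) (S j₂)) ∧
        (∀ i, ∃ j, i ∈ S j) ∧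
        (∀ i j, Y i j = if i ∈ S j then 1 / Real.sqrt ((S j).card) else 0) :=
  kmeans_feasible_iff_partition_general Y
end
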